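/- arXiv:2110.08309 — 2 statements merged into one kernel-verified Lean document; each statement's English description precedes it below -/
import Mathlib

section
/- Let G₁ and G₂ be groups with automatic structures L₁ ⊆ A* for π₁ : A* → G₁ and L₂ ⊆ B* for π₂ : B* → G₂, and let φ, ψ : G₁ → G₂ be homomorphisms such that the synchronous BRP holds for (φ, L₁, L₂) and for (ψ, L₁, L₂). Let θ : G₁ → G₂ × G₂ be the homomorphism defined by xθ = (xφ, xψ). Then the synchronous BRP holds for (θ, L₁, L₂ ⋄ L₂), where L₂ ⋄ L₂ is the convolution automatic structure on G₂ × G₂. -/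
open scoped NNReal

namespace Auto

/-- The generating set `Aπ ∪ (Aπ)⁻¹` of `G` determined by `π : A* → G`. -/
def gens {A G : Type*} [Group G] (π : FreeMonoid A →* G) : Set G :=
  (Set.range fun a : A => π (FreeMonoid.of a)) ∪
    Set.range fun a : A => (π (FreeMonoid.of a))⁻¹

/-- The word metric `d_A` on `G`: the least `n` such that `g⁻¹h` is a product of `n`
elements of `Aπ ∪ (Aπ)⁻¹`. -/
noncomputable def wdist {A G : Type*} [Group G] (π : FreeMonoid A →* G) (g h : G) : ℕ :=
  sInf {n : ℕ | ∃ l : List G, l.length = n ∧ (∀ x ∈ l, x ∈ gens π) ∧ l.prod = g⁻¹ * h}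

/-- Evaluation of a word of `A*` in `G`. -/
def evalW {A G : Type*} [Group G] (π : FreeMonoid A →* G) (w : List A) : G :=
  π (FreeMonoid.ofList w)

/-- `u` and `v` `p`-fellow travel: `d_A(u^[n]π, v^[n]π) ≤ p` for all `n`. -/
def FellowTravel {A G : Type*} [Group G] (π : FreeMonoid A →* G) (p : ℝ≥0)
    (u v : List A) : Prop :=
  ∀ n : ℕ, (wdist π (evalW π (u.take n)) (evalW π (v.take n)) : ℝ≥0) ≤ p

/-- `u` and `v` are `p`-meeting-fellow-travellers. -/
def MFT {A G : Type*} [Group G] (π : FreeMonoid A →* G) (p : ℝ≥0) (u v : List A) : Prop :=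
  FellowTravel π p u v ∧ evalW π u = evalW π v

/-- A language is regular if it is accepted by a finite-state automaton. -/
def IsRegular {A : Type*} (L : Language A) : Prop :=
  ∃ (σ : Type) (_ : Fintype σ) (M : DFA A σ), M.accepts = L

/-- `L` is an automatic structure for `π`. -/
structure IsAutomaticStructure {A G : Type*} [Group G] (π : FreeMonoid A →* G)
    (L : Language A) : Prop where
  regular : IsRegular L
  onto : ∀ g : G, ∃ w ∈ L, evalW π w = g
  ft : ∃ N : ℕ, ∀ u ∈ L, ∀ v ∈ L,
    wdist π (evalW π u) (evalW π v) ≤ 1 → FellowTravel π N u v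

/-- Evaluation of an element of `A ∪ {ε}`. -/
def evalOpt {A G : Type*} [Group G] (π : FreeMonoid A →* G) : Option A → G
  | none => 1
  | some a => π (FreeMonoid.of a)

/-- `L` is a biautomatic structure for `π`. -/
structure IsBiautomaticStructure {A G : Type*} [Group G] (π : FreeMonoid A →* G)
    (L : Language A) extends IsAutomaticStructure π L : Prop where
  bi : ∃ N : ℕ, ∀ u ∈ L, ∀ v ∈ L, ∀ a : Option A,
    evalW π v = evalOpt π a * evalW π u →
    ∀ n : ℕ, wdist π (evalOpt π a * evalW π (u.take n)) (evalW π (v.take n)) ≤ N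

/-- A language is factorial if it is closed under taking factors. -/
def IsFactorial {A : Type*} (L : Language A) : Prop :=
  ∀ u ∈ L, ∀ v : List A, v <:+: u → v ∈ L

/-- `D : ℝ≥0 → ℝ≥0` is a departure function for `(G, L)`. -/
def IsDepartureFunction {A G : Type*} [Group G] (π : FreeMonoid A →* G) (L : Language A)
    (D : ℝ≥0 → ℝ≥0) : Prop :=
  ∀ w ∈ L, ∀ r : ℝ≥0, ∀ s t : ℕ, D r ≤ (t : ℝ≥0) → s + t ≤ w.length →
    r < (wdist π (evalW π (w.take s)) (evalW π (w.take (s + t))) : ℝ≥0)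

/-- Every point of `S` is within distance `N` of `T`. -/
def NbhdIn {A G : Type*} [Group G] (π : FreeMonoid A →* G) (N : ℕ) (S T : Set G) : Prop :=
  ∀ s ∈ S, ∃ t ∈ T, wdist π s t ≤ N

/-- The Hausdorff distance between `S` and `T` is at most `N`. -/
def HausdorffLE {A G : Type*} [Group G] (π : FreeMonoid A →* G) (N : ℕ)
    (S T : Set G) : Prop :=
  NbhdIn π N S T ∧ NbhdIn π N T S

/-- `H` is an `L`-quasiconvex subgroup of `G`. -/
def IsQuasiconvex {A G : Type*} [Group G] (π : FreeMonoid A →* G) (L : Language A)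
    (H : Subgroup G) : Prop :=
  ∃ k : ℕ, ∀ h ∈ H, ∀ h' ∈ H, ∀ w ∈ L, h * evalW π w = h' →
    ∀ n : ℕ, ∃ z ∈ H, wdist π (h * evalW π (w.take n)) z ≤ k

/-- The bounded reduction property for `(φ, L, L')`. -/
def BRP {A B G G' : Type*} [Group G] [Group G'] (π : FreeMonoid A →* G)
    (π' : FreeMonoid B →* G') (φ : G →* G') (L : Language A) (L' : Language B) : Prop :=
  ∃ N : ℕ, ∀ x : G, ∀ α ∈ L, ∀ β ∈ L', evalW π' β = φ (evalW π α) →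
    HausdorffLE π' N (Set.range fun n : ℕ => φ (x * evalW π (α.take n)))
      (Set.range fun n : ℕ => φ x * evalW π' (β.take n))

/-- The synchronous bounded reduction property for `(φ, L, L')`. -/
def SyncBRP {A B G G' : Type*} [Group G] [Group G'] (π : FreeMonoid A →* G)
    (π' : FreeMonoid B →* G') (φ : G →* G') (L : Language A) (L' : Language B) : Prop :=
  ∃ N : ℕ, ∀ x : G, ∀ α ∈ L, ∀ β ∈ L', evalW π' β = φ (evalW π α) →
    ∀ n : ℕ, wdist π' (φ (x * evalW π (α.take n))) (φ x * evalW π' (β.take n)) ≤ N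

/-- The fellow traveller bounded reduction property (FT-BRP) for `(φ, L, L')`. -/
def FTBRP {A B G G' : Type*} [Group G] [Group G'] (π : FreeMonoid A →* G)
    (π' : FreeMonoid B →* G') (φ : G →* G') (L : Language A) (L' : Language B) : Prop :=
  ∀ p : ℝ≥0, ∃ q : ℝ≥0,
    ∀ u₁ ∈ L, ∀ u₂ ∈ L, ∀ u₃ ∈ L, ∀ u₁' ∈ L', ∀ u₂' ∈ L', ∀ u₃' ∈ L',
      evalW π' u₁' = φ (evalW π u₁) → evalW π' u₂' = φ (evalW π u₂) →
        evalW π' u₃' = φ (evalW π u₃) →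
          MFT π p (u₁ ++ u₂) u₃ → MFT π' q (u₁' ++ u₂') u₃'

/-- The natural homomorphism `(A ⊔ B)* → G` agreeing with `π₁` on `A` and `π₂` on `B`. -/
def sumHom {A B G : Type*} [Group G] (π₁ : FreeMonoid A →* G) (π₂ : FreeMonoid B →* G) :
    FreeMonoid (A ⊕ B) →* G :=
  FreeMonoid.lift (Sum.elim (fun a => π₁ (FreeMonoid.of a)) fun b => π₂ (FreeMonoid.of b))

/-- The union `L₁ ∪ L₂` viewed as a language over `A ⊔ B`. -/
def unionLang {A B : Type*} (L₁ : Language A) (L₂ : Language B) : Language (A ⊕ B) :=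
  {w : List (A ⊕ B) | (∃ u ∈ L₁, w = u.map Sum.inl) ∨ ∃ v ∈ L₂, w = v.map Sum.inr}

/-- `L` is an asynchronous automatic structure for `π`. -/
def IsAsyncAutomaticStructure {A G : Type*} [Group G] (π : FreeMonoid A →* G)
    (L : Language A) : Prop :=
  IsRegular L ∧ (∀ g : G, ∃ w ∈ L, evalW π w = g) ∧
    ∃ p : ℕ, ∀ u ∈ L, ∀ v ∈ L, wdist π (evalW π u) (evalW π v) ≤ 1 →
      ∃ φ ψ : ℕ → ℕ, Monotone φ ∧ Monotone ψ ∧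
        Function.Surjective φ ∧ Function.Surjective ψ ∧
          ∀ t : ℕ, wdist π (evalW π (u.take (φ t))) (evalW π (v.take (ψ t))) ≤ p

/-- `L₁` and `L₂` are equivalent automatic structures. -/
def LangEquivalent {A B G : Type*} [Group G] (π₁ : FreeMonoid A →* G)
    (π₂ : FreeMonoid B →* G) (L₁ : Language A) (L₂ : Language B) : Prop :=
  IsAsyncAutomaticStructure (sumHom π₁ π₂) (unionLang L₁ L₂)

/-- `L₁` and `L₂` are synchronously equivalent automatic structures. -/
def LangSyncEquivalent {A B G : Type*} [Group G] (π₁ : FreeMonoid A →* G)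
    (π₂ : FreeMonoid B →* G) (L₁ : Language A) (L₂ : Language B) : Prop :=
  IsAutomaticStructure (sumHom π₁ π₂) (unionLang L₁ L₂)

/-- `L` has the Hausdorff closeness property. -/
def HausClose {A G : Type*} [Group G] (π : FreeMonoid A →* G) (L : Language A) : Prop :=
  ∃ N : ℕ, ∀ u ∈ L, ∀ v ∈ L, wdist π (evalW π u) (evalW π v) ≤ 1 →
    HausdorffLE π N (Set.range fun n : ℕ => evalW π (u.take n))
      (Set.range fun n : ℕ => evalW π (v.take n))

/-- The padded alphabet `C = (A×B) ∪ (A×{$}) ∪ ({$}×B)` of convolution. -/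
abbrev ConvAlphabet (A B : Type*) := (A × B) ⊕ (A ⊕ B)

/-- The convolution `u ⋄ v` of two words. -/
def conv {A B : Type*} : List A → List B → List (ConvAlphabet A B)
  | [], [] => []
  | [], b :: v => Sum.inr (Sum.inr b) :: conv [] v
  | a :: u, [] => Sum.inr (Sum.inl a) :: conv u []
  | a :: u, b :: v => Sum.inl (a, b) :: conv u v
  termination_by u v => u.length + v.length

/-- The convolution `L₁ ⋄ L₂` of two languages. -/
def convLang {A B : Type*} (L₁ : Language A) (L₂ : Language B) :
    Language (ConvAlphabet A B) :=
  {w : List (ConvAlphabet A B) | ∃ u ∈ L₁, ∃ v ∈ L₂, w = conv u v}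

/-- The natural homomorphism `C* → G × G'` for the convolution alphabet. -/
def convHom {A B G G' : Type*} [Group G] [Group G'] (π₁ : FreeMonoid A →* G)
    (π₂ : FreeMonoid B →* G') : FreeMonoid (ConvAlphabet A B) →* G × G' :=
  FreeMonoid.lift fun c =>
    match c with
    | Sum.inl (a, b) => (π₁ (FreeMonoid.of a), π₂ (FreeMonoid.of b))
    | Sum.inr (Sum.inl a) => (π₁ (FreeMonoid.of a), 1)
    | Sum.inr (Sum.inr b) => (1, π₂ (FreeMonoid.of b))

/-- A group is automatic if it admits an automatic structure over some finite alphabet. -/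
def IsAutomaticGroup (G : Type*) [Group G] : Prop :=
  ∃ (A : Type) (_ : Fintype A) (π : FreeMonoid A →* G) (L : Language A),
    IsAutomaticStructure π L

end Auto

open Auto
section AuxLemmas

variable {B G₂ : Type*} [Group G₂]

lemma evalW_nil' {A G : Type*} [Group G] (π : FreeMonoid A →* G) : evalW π [] = 1 :=
  map_one π

lemma evalW_cons' {A G : Type*} [Group G] (π : FreeMonoid A →* G) (a : A) (w : List A) :
    evalW π (a :: w) = π (FreeMonoid.of a) * evalW π w := by
  unfold evalW; rw [← map_mul]; rfl

lemma exists_gens_eval {A G : Type*} [Group G] (π : FreeMonoid A →* G) :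
    ∀ lst : List A, ∃ l : List G, (∀ x ∈ l, x ∈ gens π) ∧ l.prod = evalW π lst := by
  intro lst
  induction lst with
  | nil => exact ⟨[], by simp, by simp [evalW_nil']⟩
  | cons a t ih =>
    obtain ⟨l, hl, hp⟩ := ih
    refine ⟨π (FreeMonoid.of a) :: l, ?_, by simp [hp, evalW_cons']⟩
    intro x hx
    rcases List.mem_cons.1 hx with rfl | hx
    · exact Or.inl ⟨a, rfl⟩
    · exact hl x hx

lemma exists_gens_list {A G : Type*} [Group G] (π : FreeMonoid A →* G)
    (hπ : Function.Surjective π) (g : G) :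
    ∃ l : List G, (∀ x ∈ l, x ∈ gens π) ∧ l.prod = g := by
  obtain ⟨w, rfl⟩ := hπ g
  simpa [evalW] using exists_gens_eval π (FreeMonoid.toList w)

lemma wdist_spec {A G : Type*} [Group G] (π : FreeMonoid A →* G)
    (hπ : Function.Surjective π) (g h : G) :
    ∃ l : List G, l.length = wdist π g h ∧ (∀ x ∈ l, x ∈ gens π) ∧ l.prod = g⁻¹ * h := by
  have hne : {n : ℕ | ∃ l : List G, l.length = n ∧ (∀ x ∈ l, x ∈ gens π) ∧
      l.prod = g⁻¹ * h}.Nonempty := by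
    obtain ⟨l, hl, hp⟩ := exists_gens_list π hπ (g⁻¹ * h)
    exact ⟨l.length, l, rfl, hl, hp⟩
  exact Nat.sInf_mem hne

lemma inl_mem_gens (π₂ : FreeMonoid B →* G₂) {g : G₂} (hg : g ∈ gens π₂) :
    (g, (1 : G₂)) ∈ gens (convHom π₂ π₂) := by
  rcases hg with ⟨a, rfl⟩ | ⟨a, rfl⟩
  · exact Or.inl ⟨Sum.inr (Sum.inl a), by simp [convHom]⟩
  · exact Or.inr ⟨Sum.inr (Sum.inl a), by simp [convHom, Prod.ext_iff]⟩

lemma inr_mem_gens (π₂ : FreeMonoid B →* G₂) {g : G₂} (hg : g ∈ gens π₂) :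
    ((1 : G₂), g) ∈ gens (convHom π₂ π₂) := by
  rcases hg with ⟨a, rfl⟩ | ⟨a, rfl⟩
  · exact Or.inl ⟨Sum.inr (Sum.inr a), by simp [convHom]⟩
  · exact Or.inr ⟨Sum.inr (Sum.inr a), by simp [convHom, Prod.ext_iff]⟩

lemma prod_map_pair_one (l : List G₂) :
    (l.map fun g => (g, (1 : G₂))).prod = (l.prod, 1) := by
  induction l with
  | nil => rfl
  | cons a l ih => simp [ih, Prod.ext_iff]

lemma prod_map_one_pair (l : List G₂) :
    (l.map fun g => ((1 : G₂), g)).prod = (1, l.prod) := by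
  induction l with
  | nil => rfl
  | cons a l ih => simp [ih, Prod.ext_iff]

lemma wdist_prod_le (π₂ : FreeMonoid B →* G₂) (hπ₂ : Function.Surjective π₂)
    (a b c d : G₂) :
    wdist (convHom π₂ π₂) (a, b) (c, d) ≤ wdist π₂ a c + wdist π₂ b d := by
  obtain ⟨l₁, hl₁, hg₁, hp₁⟩ := wdist_spec π₂ hπ₂ a c
  obtain ⟨l₂, hl₂, hg₂, hp₂⟩ := wdist_spec π₂ hπ₂ b d
  have key : wdist (convHom π₂ π₂) (a, b) (c, d) ≤
      ((l₁.map fun g => (g, (1 : G₂))) ++ l₂.map fun g => ((1 : G₂), g)).length := by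
    apply Nat.sInf_le
    refine ⟨_, rfl, ?_, ?_⟩
    · intro x hx
      rcases List.mem_append.1 hx with h | h
      · obtain ⟨g, hg, rfl⟩ := List.mem_map.1 h
        exact inl_mem_gens π₂ (hg₁ g hg)
      · obtain ⟨g, hg, rfl⟩ := List.mem_map.1 h
        exact inr_mem_gens π₂ (hg₂ g hg)
    · rw [List.prod_append, prod_map_pair_one, prod_map_one_pair]
      simp [hp₁, hp₂, Prod.ext_iff]
  simpa [hl₁, hl₂] using key

lemma conv_length_le : ∀ u v : List B, (conv u v).length ≤ u.length + v.length
  | [], [] => by simp [conv]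
  | [], b :: v => by
      simpa [conv] using conv_length_le ([] : List B) v
  | a :: u, [] => by
      have := conv_length_le u ([] : List B)
      simp [conv] at this ⊢; omega
  | a :: u, b :: v => by
      have := conv_length_le u v
      simp [conv] at this ⊢; omega
  termination_by u v => u.length + v.length

lemma evalW_conv_take (π₂ : FreeMonoid B →* G₂) :
    ∀ (u v : List B) (n : ℕ),
      evalW (convHom π₂ π₂) ((conv u v).take n) =
        (evalW π₂ (u.take n), evalW π₂ (v.take n))
  | [], [], n => by simp [conv, evalW_nil', Prod.ext_iff]
  | [], b :: v, 0 => by simp [evalW_nil', Prod.ext_iff]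
  | [], b :: v, n + 1 => by
      have ih := evalW_conv_take π₂ ([] : List B) v n
      simp only [conv, List.take_succ_cons, evalW_cons', ih]
      simp [convHom, Prod.ext_iff, evalW_nil']
  | a :: u, [], 0 => by simp [evalW_nil', Prod.ext_iff]
  | a :: u, [], n + 1 => by
      have ih := evalW_conv_take π₂ u ([] : List B) n
      simp only [conv, List.take_succ_cons, evalW_cons', ih]
      simp [convHom, Prod.ext_iff, evalW_nil']
  | a :: u, b :: v, 0 => by simp [evalW_nil', Prod.ext_iff]
  | a :: u, b :: v, n + 1 => by
      have ih := evalW_conv_take π₂ u v n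
      simp only [conv, List.take_succ_cons, evalW_cons', ih]
      simp [convHom, Prod.ext_iff]
  termination_by u v _ => u.length + v.length

lemma evalW_conv (π₂ : FreeMonoid B →* G₂) (u v : List B) :
    evalW (convHom π₂ π₂) (conv u v) = (evalW π₂ u, evalW π₂ v) := by
  have h := evalW_conv_take π₂ u v (u.length + v.length)
  rwa [List.take_of_length_le (conv_length_le u v),
    List.take_of_length_le (by omega), List.take_of_length_le (by omega)] at h

end AuxLemmas

/-- If the synchronous BRP holds for `(φ, L₁, L₂)` and `(ψ, L₁, L₂)`, then
the synchronous BRP holds for `(θ, L₁, L₂ ⋄ L₂)` where `xθ = (xφ, xψ)`. -/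
theorem syncbrp_pair {A B G₁ G₂ : Type*} [Fintype A] [Fintype B] [Group G₁] [Group G₂]
    (π₁ : FreeMonoid A →* G₁) (hπ₁ : Function.Surjective π₁)
    (π₂ : FreeMonoid B →* G₂) (hπ₂ : Function.Surjective π₂)
    (L₁ : Language A) (L₂ : Language B)
    (h₁ : IsAutomaticStructure π₁ L₁) (h₂ : IsAutomaticStructure π₂ L₂)
    (φ ψ : G₁ →* G₂)
    (hφ : SyncBRP π₁ π₂ φ L₁ L₂) (hψ : SyncBRP π₁ π₂ ψ L₁ L₂) :
    SyncBRP π₁ (convHom π₂ π₂) (φ.prod ψ) L₁ (convLang L₂ L₂) := by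
  obtain ⟨Nφ, hNφ⟩ := hφ
  obtain ⟨Nψ, hNψ⟩ := hψ
  refine ⟨Nφ + Nψ, ?_⟩
  intro x α hα β hβ heval n
  obtain ⟨u, hu, v, hv, rfl⟩ := hβ
  rw [evalW_conv π₂ u v] at heval
  have h1 : evalW π₂ u = φ (evalW π₁ α) := congrArg Prod.fst heval
  have h2 : evalW π₂ v = ψ (evalW π₁ α) := congrArg Prod.snd heval
  have d1 := hNφ x α hα u hu h1 n
  have d2 := hNψ x α hα v hv h2 n
  calc wdist (convHom π₂ π₂) ((φ.prod ψ) (x * evalW π₁ (α.take n)))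
        ((φ.prod ψ) x * evalW (convHom π₂ π₂) ((conv u v).take n))
      = wdist (convHom π₂ π₂)
          (φ (x * evalW π₁ (α.take n)), ψ (x * evalW π₁ (α.take n)))
          (φ x * evalW π₂ (u.take n), ψ x * evalW π₂ (v.take n)) := by
        rw [evalW_conv_take π₂ u v n]; rfl
    _ ≤ wdist π₂ (φ (x * evalW π₁ (α.take n))) (φ x * evalW π₂ (u.take n)) +
        wdist π₂ (ψ (x * evalW π₁ (α.take n))) (ψ x * evalW π₂ (v.take n)) :=
        wdist_prod_le π₂ hπ₂ _ _ _ _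
    _ ≤ Nφ + Nψ := add_le_add d1 d2
end

section
/- Let G₁ and G₂ be groups with automatic structures L₁ ⊆ A* for π₁ : A* → G₁ and L₂ ⊆ B* for π₂ : B* → G₂, and let φ, ψ : G₁ → G₂ be homomorphisms such that the synchronous BRP holds for (φ, L₁, L₂) and for (ψ, L₁, L₂). Then the subgroup {(xφ, xψ) : x ∈ Eq(φ,ψ)} of G₂ × G₂, which equals the intersection of the diagonal Δ = {(y,y) : y ∈ G₂} with the image of x ↦ (xφ, xψ), is (L₂ ⋄ L₂)-quasiconvex, where L₂ ⋄ L₂ is the convolution automatic structure on G₂ × G₂; in particular it is an automatic group. -/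
open scoped NNReal

open Auto

/-!
The diagonal of `G₂ × G₂` is `(L₂ ⋄ L₂)`-quasiconvex because two words of `L₂` with the same
value fellow travel, and the synchronous bounded reduction property for `φ` and `ψ` says that
the image of `x ↦ (xφ, xψ)` is `(L₂ ⋄ L₂)`-quasiconvex. Quasiconvex subgroups intersect in a
quasiconvex subgroup: a point within `r` of both has one of finitely many pairs of
displacements, and one correction chosen per pair moves it into the intersection.

A `k`-quasiconvex subgroup `H` of an automatic group is generated by its elements of length at
most `2k + 1`. The words over these generators that `k`-fellow travel a word of `L` with the same
value are onto `H`, form a regular language (an automaton tracks the displacement inside the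
finite ball of radius `k`), and fellow travel, because the inclusion `H ↪ G` is Lipschitz and
proper.
-/

namespace Language

variable {α β X : Type*}

theorem IsRegular.preimage_map {L : Language α} (hL : L.IsRegular) (f : β → α) :
    Language.IsRegular (List.map f ⁻¹' L : Language β) := by
  obtain ⟨σ, _, M, rfl⟩ := hL
  exact ⟨σ, inferInstance, M.comap f, M.accepts_comap f⟩

/-- Guess the preimage letters: the projection of a DFA along `f` is an NFA. -/
theorem IsRegular.map {L : Language α} (hL : L.IsRegular) (f : α → β) :
    (map f L).IsRegular := by
  classical
  obtain ⟨σ, _, M, rfl⟩ := hL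
  let N : NFA β σ :=
    { step := fun s b => {s' | ∃ a, f a = b ∧ M.step s a = s'}
      start := {M.start}
      accept := M.accept }
  have hN (w : List β) (s s' : σ) :
      s' ∈ N.evalFrom {s} w ↔ ∃ p : List α, p.map f = w ∧ M.evalFrom s p = s' := by
    induction w generalizing s with
    | nil => simp [eq_comm]
    | cons b w ih =>
      rw [NFA.evalFrom_cons, NFA.stepSet_singleton, NFA.mem_evalFrom_iff_exists]
      constructor
      · rintro ⟨_, ⟨a, rfl, rfl⟩, hs'⟩
        obtain ⟨p, rfl, rfl⟩ := (ih _).1 hs'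
        exact ⟨a :: p, rfl, rfl⟩
      · rintro ⟨_ | ⟨a, p⟩, hp, rfl⟩
        · simp at hp
        · obtain ⟨rfl, rfl⟩ := List.cons_eq_cons.1 hp
          exact ⟨M.step s a, ⟨a, rfl, rfl⟩, (ih _).2 ⟨p, rfl, rfl⟩⟩
  refine ⟨Set σ, inferInstance, N.toDFA, ?_⟩
  ext w
  rw [NFA.toDFA_correct, NFA.mem_accepts]
  constructor
  · rintro ⟨s', hs', hw⟩
    obtain ⟨p, rfl, rfl⟩ := (hN w _ s').1 hw
    exact ⟨p, hs', rfl⟩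
  · rintro ⟨p, hp, rfl⟩
    exact ⟨_, hp, (hN _ _ _).2 ⟨p, rfl, rfl⟩⟩

/-- Recognised by the automaton with states `F` and a sink. -/
theorem isRegular_of_foldl_mem (T : X → α → X) (x₀ : X) {F : Set X} (hF : F.Finite)
    (E : Set X) :
    Language.IsRegular {p : List α | (∀ q, q <+: p → q.foldl T x₀ ∈ F) ∧ p.foldl T x₀ ∈ E} := by
  classical
  have : Fintype F := hF.fintype
  let toF (x : X) : Option F := if h : x ∈ F then some ⟨x, h⟩ else none
  let M : DFA α (Option F) :=
    { step := fun o a => o.bind fun x => toF (T x a)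
      start := toF x₀
      accept := {o | ∃ x : F, o = some x ∧ (x : X) ∈ E} }
  have hM (p : List α) :
      M.eval p = if ∀ q, q <+: p → q.foldl T x₀ ∈ F then toF (p.foldl T x₀) else none := by
    induction p using List.reverseRecOn with
    | nil => by_cases h : x₀ ∈ F <;> simp [M, toF, h]
    | append_singleton p a ih =>
      rw [DFA.eval_append_singleton, ih]
      by_cases hp : ∀ q, q <+: p → q.foldl T x₀ ∈ F
      · simp only [if_pos hp, toF, dif_pos (hp p (List.prefix_refl p)), List.prefix_concat_iff,
          forall_eq_or_imp, List.foldl_append, List.foldl_cons, List.foldl_nil, M]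
        split_ifs <;> simp_all
      · have : ¬ ∀ q, q <+: p ++ [a] → q.foldl T x₀ ∈ F := fun h =>
          hp fun q hq => h q (hq.trans (List.prefix_append p [a]))
        simp [if_neg hp, if_neg this, M]
  refine isRegular_iff.2 ⟨Option F, inferInstance, M, ?_⟩
  ext p
  rw [DFA.mem_accepts, hM]
  split_ifs with hp
  · have hpF := hp p (List.prefix_refl p)
    simp only [M, toF, dif_pos hpF]
    exact ⟨fun ⟨x, hx, hxE⟩ => ⟨hp, by simpa [← Option.some_injective _ hx] using hxE⟩,
      fun h => ⟨_, rfl, h.2⟩⟩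
  · simp only [M]
    exact ⟨fun ⟨_, h, _⟩ => absurd h (Option.some_ne_none _).symm, fun h => absurd h.1 hp⟩

end Language

namespace Auto

section Words

variable {A G : Type*} [Group G] (π : FreeMonoid A →* G)

@[simp] lemma evalW_nil : evalW π [] = 1 := map_one π

@[simp] lemma evalW_append (u v : List A) : evalW π (u ++ v) = evalW π u * evalW π v :=
  map_mul π _ _

@[simp] lemma evalW_cons (a : A) (u : List A) :
    evalW π (a :: u) = π (FreeMonoid.of a) * evalW π u :=
  map_mul π (FreeMonoid.of a) (FreeMonoid.ofList u)

lemma evalW_singleton (a : A) : evalW π [a] = π (FreeMonoid.of a) := by simp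

lemma evalW_eq_prod (u : List A) : evalW π u = (u.map fun a => π (FreeMonoid.of a)).prod := by
  induction u with
  | nil => simp
  | cons a u ih => simp [ih]

variable {B G' : Type*} [Group G']

lemma evalW_comp (f : G →* G') (ρ : FreeMonoid B →* G) (w : List B) :
    evalW (f.comp ρ) w = f (evalW ρ w) := rfl

lemma exists_evalW_take_eq {ρ : FreeMonoid B →* G} (z : ℕ → G) (hz₀ : z 0 = 1)
    (hz : ∀ i, ∃ b, z (i + 1) = z i * ρ (FreeMonoid.of b)) (m : ℕ) :
    ∃ c : List B, c.length = m ∧ ∀ i ≤ m, evalW ρ (c.take i) = z i := by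
  induction m with
  | zero => exact ⟨[], rfl, fun i hi => by simp [Nat.le_zero.1 hi, hz₀]⟩
  | succ m ih =>
    obtain ⟨c, rfl, hc⟩ := ih
    obtain ⟨b, hb⟩ := hz c.length
    refine ⟨c ++ [b], by simp, fun i hi => ?_⟩
    rcases Nat.lt_or_ge i (c.length + 1) with hi' | hi'
    · rw [List.take_append_of_le_length (by omega)]
      exact hc i (by omega)
    · obtain rfl : i = c.length + 1 := by omega
      rw [List.take_of_length_le (by simp), evalW_append, evalW_singleton, hb,
        ← hc _ le_rfl, List.take_length]

end Words

section WordMetric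

variable {A A' G G' : Type*} [Group G] [Group G'] {π : FreeMonoid A →* G}

lemma inv_mem_gens {x : G} (hx : x ∈ gens π) : x⁻¹ ∈ gens π := by
  rcases hx with ⟨a, rfl⟩ | ⟨a, rfl⟩
  exacts [Or.inr ⟨a, rfl⟩, Or.inl ⟨a, (inv_inv _).symm⟩]

variable (π) in
def wordBall (k : ℕ) : Set G :=
  {g | ∃ l : List G, l.length ≤ k ∧ (∀ x ∈ l, x ∈ gens π) ∧ l.prod = g}

lemma one_mem_wordBall (k : ℕ) : (1 : G) ∈ wordBall π k := ⟨[], by simp, by simp, rfl⟩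

lemma mem_wordBall_one_of_mem_gens {x : G} (hx : x ∈ gens π) : x ∈ wordBall π 1 :=
  ⟨[x], by simp, by simpa using hx, by simp⟩

lemma mul_mem_wordBall {g h : G} {j k : ℕ} (hg : g ∈ wordBall π j) (hh : h ∈ wordBall π k) :
    g * h ∈ wordBall π (j + k) := by
  obtain ⟨l, hl, hlg, rfl⟩ := hg
  obtain ⟨l', hl', hlg', rfl⟩ := hh
  refine ⟨l ++ l', by simp; omega, fun x hx => ?_, List.prod_append⟩
  rcases List.mem_append.1 hx with hx | hx
  exacts [hlg x hx, hlg' x hx]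

lemma inv_mem_wordBall {g : G} {k : ℕ} (hg : g ∈ wordBall π k) : g⁻¹ ∈ wordBall π k := by
  obtain ⟨l, hl, hlg, rfl⟩ := hg
  refine ⟨(l.map (·⁻¹)).reverse, by simpa using hl, fun x hx => ?_, (List.prod_inv_reverse l).symm⟩
  obtain ⟨y, hy, rfl⟩ := List.mem_map.1 (List.mem_reverse.1 hx)
  exact inv_mem_gens (hlg y hy)

lemma exists_mul_of_mem_wordBall_add {g : G} {j k : ℕ} (hg : g ∈ wordBall π (j + k)) :
    ∃ a ∈ wordBall π j, ∃ b ∈ wordBall π k, a * b = g := by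
  obtain ⟨l, hl, hlg, rfl⟩ := hg
  refine ⟨(l.take j).prod, ⟨l.take j, by simp, fun x hx => hlg x (List.mem_of_mem_take hx), rfl⟩,
    (l.drop j).prod, ⟨l.drop j, by simp; omega, fun x hx => hlg x (List.mem_of_mem_drop hx), rfl⟩,
    by rw [← List.prod_append, List.take_append_drop]⟩

lemma wordBall_finite [Finite A] (k : ℕ) : (wordBall π k).Finite := by
  have : Finite (gens π) := ((Set.finite_range _).union (Set.finite_range _)).to_subtype
  refine ((List.finite_length_le (gens π) k).image fun l => (l.map (↑)).prod).subset ?_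
  rintro _ ⟨l, hl, hlg, rfl⟩
  lift l to List (gens π) using hlg
  exact ⟨l, by simpa using hl, rfl⟩

lemma exists_prod_gens (hπ : Function.Surjective π) (g : G) :
    ∃ l : List G, (∀ x ∈ l, x ∈ gens π) ∧ l.prod = g := by
  obtain ⟨w, rfl⟩ := hπ g
  refine ⟨w.toList.map fun a => π (FreeMonoid.of a), ?_, (evalW_eq_prod π w.toList).symm⟩
  simp only [List.mem_map]
  rintro _ ⟨a, -, rfl⟩
  exact Or.inl ⟨a, rfl⟩

lemma wdist_le_of_mem_wordBall {g h : G} {k : ℕ} (hgh : g⁻¹ * h ∈ wordBall π k) :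
    wdist π g h ≤ k := by
  obtain ⟨l, hl, hlg, hprod⟩ := hgh
  unfold wdist
  refine (Nat.sInf_le ?_).trans hl
  exact ⟨l, rfl, hlg, hprod⟩

/-- `wdist` is `sInf ∅ = 0` outside the subgroup generated by `Aπ`, hence the surjectivity
assumptions from here on. -/
lemma wdist_le_iff (hπ : Function.Surjective π) {g h : G} {k : ℕ} :
    wdist π g h ≤ k ↔ g⁻¹ * h ∈ wordBall π k := by
  refine ⟨fun hk => ?_, wdist_le_of_mem_wordBall⟩
  obtain ⟨l, hlg, hprod⟩ := exists_prod_gens hπ (g⁻¹ * h)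
  have hne : {n : ℕ | ∃ l : List G, l.length = n ∧ (∀ x ∈ l, x ∈ gens π) ∧
      l.prod = g⁻¹ * h}.Nonempty := ⟨l.length, l, rfl, hlg, hprod⟩
  obtain ⟨l', hl', hlg', hprod'⟩ := Nat.sInf_mem hne
  exact ⟨l', hl'.trans_le hk, hlg', hprod'⟩

lemma mem_wordBall_wdist (hπ : Function.Surjective π) (g h : G) :
    g⁻¹ * h ∈ wordBall π (wdist π g h) :=
  (wdist_le_iff hπ).1 le_rfl

@[simp] lemma wdist_self (g : G) : wdist π g g = 0 :=
  Nat.le_zero.1 (wdist_le_of_mem_wordBall (by simpa using one_mem_wordBall 0))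

lemma wdist_mul_left (x g h : G) : wdist π (x * g) (x * h) = wdist π g h := by
  simp only [wdist, mul_inv_rev, mul_assoc, inv_mul_cancel_left]

lemma wdist_comm (hπ : Function.Surjective π) (g h : G) : wdist π g h = wdist π h g := by
  suffices ∀ g h : G, wdist π g h ≤ wdist π h g from le_antisymm (this g h) (this h g)
  intro g h
  exact wdist_le_of_mem_wordBall (by simpa using inv_mem_wordBall (mem_wordBall_wdist hπ h g))

lemma wdist_triangle (hπ : Function.Surjective π) (g m h : G) :
    wdist π g h ≤ wdist π g m + wdist π m h :=
  wdist_le_of_mem_wordBall (by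
    simpa [mul_assoc] using
      mul_mem_wordBall (mem_wordBall_wdist hπ g m) (mem_wordBall_wdist hπ m h))

lemma map_mem_wordBall {π' : FreeMonoid A' →* G'} {f : G →* G'} {c k : ℕ}
    (hf : ∀ x ∈ gens π, f x ∈ wordBall π' c) {g : G} (hg : g ∈ wordBall π k) :
    f g ∈ wordBall π' (c * k) := by
  obtain ⟨l, hl, hlg, rfl⟩ := hg
  induction l generalizing k with
  | nil => simpa using one_mem_wordBall _
  | cons x l ih =>
    obtain ⟨k, rfl⟩ : ∃ k', k = k' + 1 := Nat.exists_eq_add_one.2 (by simp at hl; omega)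
    rw [List.prod_cons, map_mul, Nat.mul_succ, add_comm]
    exact mul_mem_wordBall (hf x (hlg x (by simp)))
      (ih (by simpa using hl) fun y hy => hlg y (by simp [hy]))

lemma wdist_map_le (hπ : Function.Surjective π) {π' : FreeMonoid A' →* G'} {f : G →* G'} {c : ℕ}
    (hf : ∀ x ∈ gens π, f x ∈ wordBall π' c) (g h : G) :
    wdist π' (f g) (f h) ≤ c * wdist π g h :=
  wdist_le_of_mem_wordBall (by simpa using map_mem_wordBall hf (mem_wordBall_wdist hπ g h))

lemma wdist_evalW_take_succ (u : List A) (n : ℕ) :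
    wdist π (evalW π (u.take n)) (evalW π (u.take (n + 1))) ≤ 1 := by
  refine wdist_le_of_mem_wordBall ?_
  rcases Nat.lt_or_ge n u.length with hn | hn
  · rw [List.take_add_one, List.getElem?_eq_getElem hn]
    simp only [evalW_append, Option.toList_some, evalW_singleton, inv_mul_cancel_left]
    exact mem_wordBall_one_of_mem_gens (Or.inl ⟨u[n], rfl⟩)
  · simpa [List.take_of_length_le hn, List.take_of_length_le (hn.trans n.le_succ)]
      using one_mem_wordBall 1

lemma exists_wdist_le_of_wdist_map_le [Finite A] (hπ : Function.Surjective π)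
    {ρ : FreeMonoid A' →* G'} {f : G' →* G} (hf : Function.Injective f) (K : ℕ) :
    ∃ N : ℕ, ∀ x y : G', wdist π (f x) (f y) ≤ K → wdist ρ x y ≤ N := by
  have : Finite (f ⁻¹' wordBall π K) :=
    ((wordBall_finite K).preimage hf.injOn).to_subtype
  obtain ⟨N, hN⟩ := Finite.bddAbove_range fun h : f ⁻¹' wordBall π K => wdist ρ 1 h
  refine ⟨N, fun x y hxy => ?_⟩
  have hxy : x⁻¹ * y ∈ f ⁻¹' wordBall π K := by simpa using (wdist_le_iff hπ).1 hxy
  rw [← wdist_mul_left x⁻¹, inv_mul_cancel]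
  exact hN ⟨⟨_, hxy⟩, rfl⟩

end WordMetric

section FellowTravel

variable {A G : Type*} [Group G] {π : FreeMonoid A →* G} {L : Language A}

lemma fellowTravel_natCast_iff {N : ℕ} {u v : List A} :
    FellowTravel π N u v ↔ ∀ n, wdist π (evalW π (u.take n)) (evalW π (v.take n)) ≤ N := by
  simp only [FellowTravel, Nat.cast_le]

lemma surjective_of_onto (h : ∀ g, ∃ w ∈ L, evalW π w = g) : Function.Surjective π :=
  fun g =>
    let ⟨w, _, hw⟩ := h g
    ⟨FreeMonoid.ofList w, hw⟩

lemma IsAutomaticStructure.surjective (hL : IsAutomaticStructure π L) : Function.Surjective π :=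
  surjective_of_onto hL.onto

/-- Induction on `K`, through a word of `L` one step closer to the target. -/
lemma IsAutomaticStructure.exists_fellowTravel (hL : IsAutomaticStructure π L) (K : ℕ) :
    ∃ N : ℕ, ∀ u ∈ L, ∀ v ∈ L, wdist π (evalW π u) (evalW π v) ≤ K →
      ∀ n, wdist π (evalW π (u.take n)) (evalW π (v.take n)) ≤ N := by
  obtain ⟨N₁, hN₁⟩ := hL.ft
  simp only [fellowTravel_natCast_iff] at hN₁
  induction K with
  | zero => exact ⟨N₁, fun u hu v hv hd => hN₁ u hu v hv (hd.trans zero_le_one)⟩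
  | succ K ih =>
    obtain ⟨N, hN⟩ := ih
    refine ⟨N + N₁, fun u hu v hv hd n => ?_⟩
    obtain ⟨a, ha, b, hb, hab⟩ :=
      exists_mul_of_mem_wordBall_add ((wdist_le_iff hL.surjective).1 hd)
    obtain ⟨w, hw, hwa⟩ := hL.onto (evalW π u * a)
    have huw : wdist π (evalW π u) (evalW π w) ≤ K :=
      wdist_le_of_mem_wordBall (by rwa [hwa, inv_mul_cancel_left])
    have hwv : wdist π (evalW π w) (evalW π v) ≤ 1 :=
      wdist_le_of_mem_wordBall (by
        rwa [hwa, mul_inv_rev, mul_assoc, ← hab, inv_mul_cancel_left])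
    exact (wdist_triangle hL.surjective _ (evalW π (w.take n)) _).trans
      (add_le_add (hN u hu w hw huw n) (hN₁ w hw v hv hwv n))

end FellowTravel

section Convolution

variable {A B G G' : Type*} [Group G] [Group G'] {π₁ : FreeMonoid A →* G}
  {π₂ : FreeMonoid B →* G'}

lemma conv_take (u : List A) (v : List B) (n : ℕ) :
    (conv u v).take n = conv (u.take n) (v.take n) := by
  induction u, v using conv.induct generalizing n <;> cases n <;> simp_all [conv]

lemma evalW_conv (u : List A) (v : List B) :
    evalW (convHom π₁ π₂) (conv u v) = (evalW π₁ u, evalW π₂ v) := by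
  induction u, v using conv.induct <;> simp_all [conv, convHom, Prod.ext_iff]

lemma mk_one_mem_gens_convHom {x : G} (hx : x ∈ gens π₁) :
    (x, (1 : G')) ∈ gens (convHom π₁ π₂) := by
  rcases hx with ⟨a, rfl⟩ | ⟨a, rfl⟩
  · exact Or.inl ⟨Sum.inr (Sum.inl a), by simp [convHom]⟩
  · exact Or.inr ⟨Sum.inr (Sum.inl a), by simp [convHom]⟩

lemma one_mk_mem_gens_convHom {y : G'} (hy : y ∈ gens π₂) :
    ((1 : G), y) ∈ gens (convHom π₁ π₂) := by
  rcases hy with ⟨b, rfl⟩ | ⟨b, rfl⟩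
  · exact Or.inl ⟨Sum.inr (Sum.inr b), by simp [convHom]⟩
  · exact Or.inr ⟨Sum.inr (Sum.inr b), by simp [convHom]⟩

lemma mem_wordBall_one_of_mem_gens_convHom {x : G × G'} (hx : x ∈ gens (convHom π₁ π₂)) :
    x.1 ∈ wordBall π₁ 1 ∧ x.2 ∈ wordBall π₂ 1 := by
  have h₁ (a : A) : π₁ (FreeMonoid.of a) ∈ wordBall π₁ 1 :=
    mem_wordBall_one_of_mem_gens (Or.inl ⟨a, rfl⟩)
  have h₂ (b : B) : π₂ (FreeMonoid.of b) ∈ wordBall π₂ 1 :=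
    mem_wordBall_one_of_mem_gens (Or.inl ⟨b, rfl⟩)
  rcases hx with ⟨c, rfl⟩ | ⟨c, rfl⟩ <;> rcases c with ⟨a, b⟩ | a | b <;>
    simp [convHom, h₁, h₂, inv_mem_wordBall, one_mem_wordBall]

lemma wdist_convHom_le (hπ₁ : Function.Surjective π₁) (hπ₂ : Function.Surjective π₂)
    (a a' : G) (b b' : G') :
    wdist (convHom π₁ π₂) (a, b) (a', b') ≤ wdist π₁ a a' + wdist π₂ b b' := by
  have ha := map_mem_wordBall (f := MonoidHom.inl G G')
    (fun x hx => mem_wordBall_one_of_mem_gens (mk_one_mem_gens_convHom (π₂ := π₂) hx))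
    (mem_wordBall_wdist hπ₁ a a')
  have hb := map_mem_wordBall (f := MonoidHom.inr G G')
    (fun y hy => mem_wordBall_one_of_mem_gens (one_mk_mem_gens_convHom (π₁ := π₁) hy))
    (mem_wordBall_wdist hπ₂ b b')
  refine wdist_le_of_mem_wordBall ?_
  simpa using mul_mem_wordBall ha hb

lemma wdist_le_wdist_convHom (hπ : Function.Surjective (convHom π₁ π₂)) (a a' : G)
    (b b' : G') :
    wdist π₁ a a' ≤ wdist (convHom π₁ π₂) (a, b) (a', b') ∧
      wdist π₂ b b' ≤ wdist (convHom π₁ π₂) (a, b) (a', b') := by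
  constructor
  · simpa using wdist_map_le hπ (f := MonoidHom.fst G G')
      (fun x hx => (mem_wordBall_one_of_mem_gens_convHom hx).1) (a, b) (a', b')
  · simpa using wdist_map_le hπ (f := MonoidHom.snd G G')
      (fun x hx => (mem_wordBall_one_of_mem_gens_convHom hx).2) (a, b) (a', b')

end Convolution

section ConvolutionAutomaton

/-- Which of the two words are still being read by the convolution automaton. -/
inductive ConvMode
  | both
  | left
  | right
  deriving DecidableEq

instance : Fintype ConvMode :=
  ⟨{.both, .left, .right}, fun m => by cases m <;> simp⟩

variable {A B σ τ : Type*}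

/-- `none` is a sink, entered as soon as the padding is not of the form `u ⋄ v`. -/
def convDFA (M : DFA A σ) (N : DFA B τ) :
    DFA (ConvAlphabet A B) (Option (σ × τ × ConvMode)) where
  step
    | some (s, t, .both), .inl (a, b) => some (M.step s a, N.step t b, .both)
    | some (s, t, .both), .inr (.inl a) | some (s, t, .left), .inr (.inl a) =>
        some (M.step s a, t, .left)
    | some (s, t, .both), .inr (.inr b) | some (s, t, .right), .inr (.inr b) =>
        some (s, N.step t b, .right)
    | _, _ => none
  start := some (M.start, N.start, .both)
  accept := {x | ∃ s ∈ M.accept, ∃ t ∈ N.accept, ∃ m, x = some (s, t, m)}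

variable (M : DFA A σ) (N : DFA B τ)

lemma convDFA_evalFrom_none (w : List (ConvAlphabet A B)) :
    (convDFA M N).evalFrom none w = none := by
  induction w with
  | nil => rfl
  | cons c w ih => exact ih

lemma convDFA_evalFrom_conv (u : List A) (v : List B) (s : σ) (t : τ) (m : ConvMode)
    (hl : m = .left → v = []) (hr : m = .right → u = []) :
    ∃ m', (convDFA M N).evalFrom (some (s, t, m)) (conv u v) =
      some (M.evalFrom s u, N.evalFrom t v, m') := by
  induction u, v using conv.induct generalizing s t m with
  | case1 => exact ⟨m, by simp [conv]⟩
  | case2 b v ih =>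
    cases m
    case left => exact absurd (hl rfl) (List.cons_ne_nil _ _)
    all_goals simpa [conv, convDFA] using ih s (N.step t b) .right (by simp) fun _ => rfl
  | case3 a u ih =>
    cases m
    case right => exact absurd (hr rfl) (List.cons_ne_nil _ _)
    all_goals simpa [conv, convDFA] using ih (M.step s a) t .left (fun _ => rfl) (by simp)
  | case4 a u b v ih =>
    cases m
    case both => simpa [conv, convDFA] using ih (M.step s a) (N.step t b) .both (by simp) (by simp)
    case left => exact absurd (hl rfl) (List.cons_ne_nil _ _)
    case right => exact absurd (hr rfl) (List.cons_ne_nil _ _)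

lemma exists_conv_of_convDFA_evalFrom_mem_accept (w : List (ConvAlphabet A B)) (s : σ) (t : τ)
    (m : ConvMode) (hw : (convDFA M N).evalFrom (some (s, t, m)) w ∈ (convDFA M N).accept) :
    ∃ u v, w = conv u v ∧ M.evalFrom s u ∈ M.accept ∧ N.evalFrom t v ∈ N.accept ∧
      (m = .left → v = []) ∧ (m = .right → u = []) := by
  induction w generalizing s t m with
  | nil =>
    obtain ⟨s, hs, t, ht, m, h⟩ := hw
    cases h
    exact ⟨[], [], by simp [conv], hs, ht, by simp⟩
  | cons c w ih =>
    have dead : (convDFA M N).evalFrom none w ∉ (convDFA M N).accept := by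
      rw [convDFA_evalFrom_none]
      rintro ⟨_, _, _, _, _, h⟩
      exact Option.some_ne_none _ h.symm
    rcases c with ⟨a, b⟩ | a | b
    · cases m
      case both =>
        obtain ⟨u, v, rfl, hu, hv, -⟩ := ih (M.step s a) (N.step t b) .both hw
        exact ⟨a :: u, b :: v, by simp [conv], hu, hv, by simp⟩
      all_goals exact absurd hw dead
    · cases m
      case right => exact absurd hw dead
      all_goals
        obtain ⟨u, v, rfl, hu, hv, hv₀, -⟩ := ih (M.step s a) t .left hw
        obtain rfl := hv₀ rfl
        exact ⟨a :: u, [], by simp [conv], hu, hv, by simp⟩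
    · cases m
      case left => exact absurd hw dead
      all_goals
        obtain ⟨u, v, rfl, hu, hv, -, hu₀⟩ := ih s (N.step t b) .right hw
        obtain rfl := hu₀ rfl
        exact ⟨[], b :: v, by simp [conv], hu, hv, by simp⟩

lemma convDFA_accepts : (convDFA M N).accepts = convLang M.accepts N.accepts := by
  ext w
  constructor
  · intro hw
    obtain ⟨u, v, rfl, hu, hv, -⟩ :=
      exists_conv_of_convDFA_evalFrom_mem_accept M N w M.start N.start .both hw
    exact ⟨u, hu, v, hv, rfl⟩
  · rintro ⟨u, hu, v, hv, rfl⟩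
    obtain ⟨m, hm⟩ := convDFA_evalFrom_conv M N u v M.start N.start .both (by simp) (by simp)
    exact ⟨_, hu, _, hv, m, hm⟩

lemma isRegular_convLang {L₁ : Language A} {L₂ : Language B} (h₁ : IsRegular L₁)
    (h₂ : IsRegular L₂) : IsRegular (convLang L₁ L₂) := by
  obtain ⟨σ, _, M, rfl⟩ := h₁
  obtain ⟨τ, _, N, rfl⟩ := h₂
  exact ⟨_, inferInstance, convDFA M N, convDFA_accepts M N⟩

end ConvolutionAutomaton

section Quasiconvexity

variable {A B C G₁ G₂ G₃ : Type*} [Group G₁] [Group G₂] [Group G₃]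
  {π₁ : FreeMonoid A →* G₁} {π₂ : FreeMonoid B →* G₂} {π₃ : FreeMonoid C →* G₃}
  {L₁ : Language A} {L₂ : Language B} {L₃ : Language C}

lemma IsAutomaticStructure.convolution (h₂ : IsAutomaticStructure π₂ L₂)
    (h₃ : IsAutomaticStructure π₃ L₃) :
    IsAutomaticStructure (convHom π₂ π₃) (convLang L₂ L₃) := by
  have onto (g : G₂ × G₃) : ∃ w ∈ convLang L₂ L₃, evalW (convHom π₂ π₃) w = g := by
    obtain ⟨u, hu, hug⟩ := h₂.onto g.1
    obtain ⟨v, hv, hvg⟩ := h₃.onto g.2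
    rw [← Prod.mk.eta (p := g), ← hug, ← hvg]
    exact ⟨conv u v, ⟨u, hu, v, hv, rfl⟩, evalW_conv u v⟩
  have hπ := surjective_of_onto onto
  refine ⟨isRegular_convLang h₂.regular h₃.regular, onto, ?_⟩
  obtain ⟨N₂, hN₂⟩ := h₂.ft
  obtain ⟨N₃, hN₃⟩ := h₃.ft
  refine ⟨N₂ + N₃, ?_⟩
  rintro _ ⟨u, hu, v, hv, rfl⟩ _ ⟨u', hu', v', hv', rfl⟩ hd
  rw [evalW_conv, evalW_conv] at hd
  obtain ⟨hdu, hdv⟩ := wdist_le_wdist_convHom hπ _ _ _ _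
  simp only [fellowTravel_natCast_iff] at hN₂ hN₃ ⊢
  intro n
  rw [conv_take, conv_take, evalW_conv, evalW_conv]
  exact (wdist_convHom_le h₂.surjective h₃.surjective _ _ _ _).trans
    (add_le_add (hN₂ u hu u' hu' (hdu.trans hd) n) (hN₃ v hv v' hv' (hdv.trans hd) n))

lemma SyncBRP.prod (hπ₂ : Function.Surjective π₂) (hπ₃ : Function.Surjective π₃)
    {φ : G₁ →* G₂} {ψ : G₁ →* G₃} (hφ : SyncBRP π₁ π₂ φ L₁ L₂) (hψ : SyncBRP π₁ π₃ ψ L₁ L₃) :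
    SyncBRP π₁ (convHom π₂ π₃) (φ.prod ψ) L₁ (convLang L₂ L₃) := by
  obtain ⟨N₂, hN₂⟩ := hφ
  obtain ⟨N₃, hN₃⟩ := hψ
  refine ⟨N₂ + N₃, ?_⟩
  rintro x α hα _ ⟨u, hu, v, hv, rfl⟩ he n
  rw [evalW_conv, MonoidHom.prod_apply, Prod.mk.injEq] at he
  rw [conv_take, evalW_conv, MonoidHom.prod_apply, MonoidHom.prod_apply, Prod.mk_mul_mk]
  exact (wdist_convHom_le hπ₂ hπ₃ _ _ _ _).trans
    (add_le_add (hN₂ x α hα u hu he.1 n) (hN₃ x α hα v hv he.2 n))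

/-- The path `n ↦ Φ (x · α^[n])` lies in the range, and the bounded reduction property keeps
it near the path of the `L₂`-word. -/
lemma SyncBRP.isQuasiconvex_range (hL₁ : ∀ g, ∃ α ∈ L₁, evalW π₁ α = g)
    (hπ₂ : Function.Surjective π₂) {Φ : G₁ →* G₂} (hΦ : SyncBRP π₁ π₂ Φ L₁ L₂) :
    IsQuasiconvex π₂ L₂ Φ.range := by
  obtain ⟨N, hN⟩ := hΦ
  refine ⟨N, ?_⟩
  rintro _ ⟨x, rfl⟩ _ ⟨x', rfl⟩ w hw he n
  obtain ⟨α, hα, hαx⟩ := hL₁ (x⁻¹ * x')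
  have hw' : evalW π₂ w = Φ (evalW π₁ α) := by
    rw [hαx, map_mul, map_inv, ← he, inv_mul_cancel_left]
  refine ⟨Φ (x * evalW π₁ (α.take n)), ⟨_, rfl⟩, ?_⟩
  rw [wdist_comm hπ₂]
  exact hN x α hα w hw hw' n

lemma IsAutomaticStructure.isQuasiconvex_diagonal (h₂ : IsAutomaticStructure π₂ L₂) :
    IsQuasiconvex (convHom π₂ π₂) (convLang L₂ L₂)
      ((MonoidHom.id G₂).prod (MonoidHom.id G₂)).range := by
  obtain ⟨N, hN⟩ := h₂.exists_fellowTravel 0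
  refine ⟨N, ?_⟩
  rintro _ ⟨y, rfl⟩ _ ⟨y', rfl⟩ _ ⟨u, hu, v, hv, rfl⟩ he n
  simp only [evalW_conv, MonoidHom.prod_apply, MonoidHom.id_apply, Prod.mk_mul_mk,
    Prod.mk.injEq] at he
  have huv : evalW π₂ v = evalW π₂ u := mul_left_cancel (he.2.trans he.1.symm)
  refine ⟨(y * evalW π₂ (u.take n), y * evalW π₂ (u.take n)), ⟨_, rfl⟩, ?_⟩
  simp only [conv_take, evalW_conv, MonoidHom.prod_apply, MonoidHom.id_apply, Prod.mk_mul_mk]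
  refine (wdist_convHom_le h₂.surjective h₂.surjective _ _ _ _).trans ?_
  rw [wdist_self, zero_add, wdist_mul_left]
  exact hN v hv u hu (by simp [huv]) n

end Quasiconvexity

section Intersection

variable {A G : Type*} [Group G] [Finite A] {π : FreeMonoid A →* G}

/-- The two displacements range over a finite set, and for each realised pair one fixed
witness gives the correction. -/
lemma exists_wdist_inf_le (hπ : Function.Surjective π) (H K : Subgroup G) (r : ℕ) :
    ∃ k : ℕ, ∀ p : G, (∃ x ∈ H, wdist π p x ≤ r) → (∃ y ∈ K, wdist π p y ≤ r) →
      ∃ z ∈ H ⊓ K, wdist π p z ≤ k := by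
  set D : Set (G × G) :=
    {d | d.1 ∈ wordBall π r ∧ d.2 ∈ wordBall π r ∧ ∃ q : G, q * d.1 ∈ H ∧ q * d.2 ∈ K}
  have hD : D.Finite :=
    ((wordBall_finite r).prod (wordBall_finite r)).subset fun d hd => ⟨hd.1, hd.2.1⟩
  have : Finite D := hD.to_subtype
  choose q hq using fun d : D => d.2.2.2
  obtain ⟨k, hk⟩ := Finite.bddAbove_range fun d : D => wdist π 1 (q d)⁻¹
  refine ⟨k, fun p ⟨x, hx, hpx⟩ ⟨y, hy, hpy⟩ => ?_⟩
  have hpx := (wdist_le_iff hπ).1 hpx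
  have hpy := (wdist_le_iff hπ).1 hpy
  let d : D := ⟨(p⁻¹ * x, p⁻¹ * y), hpx, hpy, p, by simpa using hx, by simpa using hy⟩
  refine ⟨p * (q d)⁻¹, ⟨?_, ?_⟩, ?_⟩
  · have hqx : q d * (p⁻¹ * x) ∈ H := (hq d).1
    simpa [mul_assoc] using H.mul_mem hx (H.inv_mem hqx)
  · have hqy : q d * (p⁻¹ * y) ∈ K := (hq d).2
    simpa [mul_assoc] using K.mul_mem hy (K.inv_mem hqy)
  · rw [← mul_one p, mul_assoc, wdist_mul_left, one_mul]
    exact hk ⟨d, rfl⟩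

lemma IsQuasiconvex.inf (hπ : Function.Surjective π) {L : Language A} {H K : Subgroup G}
    (hH : IsQuasiconvex π L H) (hK : IsQuasiconvex π L K) : IsQuasiconvex π L (H ⊓ K) := by
  obtain ⟨kH, hkH⟩ := hH
  obtain ⟨kK, hkK⟩ := hK
  obtain ⟨k, hk⟩ := exists_wdist_inf_le hπ H K (max kH kK)
  refine ⟨k, fun h hh h' hh' w hw he n => hk _ ?_ ?_⟩
  · obtain ⟨z, hz, hd⟩ := hkH h hh.1 h' hh'.1 w hw he n
    exact ⟨z, hz, hd.trans (le_max_left _ _)⟩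
  · obtain ⟨z, hz, hd⟩ := hkK h hh.2 h' hh'.2 w hw he n
    exact ⟨z, hz, hd.trans (le_max_right _ _)⟩

end Intersection


section SyncPairs

variable {A B G : Type*} [Group G]

def syncPairs (π : FreeMonoid A →* G) (ρ : FreeMonoid B →* G) (k : ℕ) : Language (A × B) :=
  {p | (∀ q, q <+: p →
      (evalW π (q.map Prod.fst))⁻¹ * evalW ρ (q.map Prod.snd) ∈ wordBall π k) ∧
    evalW π (p.map Prod.fst) = evalW ρ (p.map Prod.snd)}

lemma foldl_eq_evalW (π : FreeMonoid A →* G) (ρ : FreeMonoid B →* G) (p : List (A × B)) (g : G) :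
    p.foldl (fun g c => (π (FreeMonoid.of c.1))⁻¹ * g * ρ (FreeMonoid.of c.2)) g =
      (evalW π (p.map Prod.fst))⁻¹ * g * evalW ρ (p.map Prod.snd) := by
  induction p generalizing g with
  | nil => simp
  | cons c p ih => rw [List.foldl_cons, ih]; simp [mul_assoc]

lemma isRegular_syncPairs [Finite A] (π : FreeMonoid A →* G) (ρ : FreeMonoid B →* G) (k : ℕ) :
    IsRegular (syncPairs π ρ k) := by
  have h := Language.isRegular_of_foldl_mem
    (fun g (c : A × B) => (π (FreeMonoid.of c.1))⁻¹ * g * ρ (FreeMonoid.of c.2)) 1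
    (wordBall_finite (π := π) k) {1}
  simp only [foldl_eq_evalW, mul_one, Set.mem_singleton_iff, inv_mul_eq_one] at h
  exact h

end SyncPairs

section QuasiconvexSubgroup

variable {A B G : Type*} [Group G] {π : FreeMonoid A →* G} {L : Language A} {H : Subgroup G}

variable (π L H) in
def IsQuasiconvexWith (k : ℕ) : Prop :=
  ∀ h ∈ H, ∀ h' ∈ H, ∀ w ∈ L, h * evalW π w = h' →
    ∀ n : ℕ, ∃ z ∈ H, wdist π (h * evalW π (w.take n)) z ≤ k

variable (π L) in
/-- The words over the generators `ℓ` of `H` that `k`-fellow travel a word of `L` with the same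
value, read off as second coordinates of pair words. -/
def subgroupLang (ℓ : B → H) (k : ℕ) : Language B :=
  Language.map Prod.snd
    (List.map Prod.fst ⁻¹' L ⊓ syncPairs π (H.subtype.comp (FreeMonoid.lift ℓ)) k :
      Language (A × B))

lemma isRegular_subgroupLang [Finite A] (hL : IsRegular L) (ℓ : B → H) (k : ℕ) :
    IsRegular (subgroupLang π L ℓ k) :=
  ((Language.IsRegular.preimage_map hL Prod.fst).inf (isRegular_syncPairs _ _ k)).map Prod.snd

lemma mem_subgroupLang {ℓ : B → H} {k : ℕ} {c : List B} :
    c ∈ subgroupLang π L ℓ k ↔ ∃ p : List (A × B), p.map Prod.fst ∈ L ∧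
      p ∈ syncPairs π (H.subtype.comp (FreeMonoid.lift ℓ)) k ∧ p.map Prod.snd = c := by
  show (∃ p, (_ ∧ _) ∧ _) ↔ _
  simp only [and_assoc]
  rfl

lemma IsQuasiconvexWith.exists_near_prefixes {k : ℕ} (hk : IsQuasiconvexWith π L H k)
    {w : List A} (hw : w ∈ L) {h : H} (hwh : evalW π w = h) :
    ∃ z : ℕ → H, z 0 = 1 ∧ (∀ {i}, w.length ≤ i → z i = h) ∧
      ∀ i, wdist π (evalW π (w.take i)) (z i) ≤ k := by
  have near (i : ℕ) : ∃ z : H, wdist π (evalW π (w.take i)) z ≤ k ∧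
      (i = 0 → z = 1) ∧ (w.length ≤ i → z = h) := by
    by_cases hi : w.length ≤ i
    · refine ⟨h, by simp [List.take_of_length_le hi, hwh], fun hi0 => ?_, fun _ => rfl⟩
      subst hi0
      ext
      simp [← hwh, List.length_eq_zero_iff.1 (Nat.le_zero.1 hi)]
    · rcases Nat.eq_zero_or_pos i with rfl | hi0
      · exact ⟨1, by simp, fun _ => rfl, fun h0 => absurd h0 hi⟩
      obtain ⟨z, hz, hd⟩ := hk 1 H.one_mem h h.2 w hw (by rw [one_mul, hwh]) i
      exact ⟨⟨z, hz⟩, by simpa using hd, by omega, fun h0 => absurd h0 hi⟩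
  choose z hz hz₀ hzh using near
  exact ⟨z, hz₀ 0 rfl, hzh _, hz⟩

/-- Consecutive points `z i ∈ H` near the prefixes of a word of `L` are `2k + 1` apart, so they
differ by a generator; spelling out these differences gives the word. -/
lemma exists_mem_subgroupLang (hL : IsAutomaticStructure π L) {k : ℕ}
    (hk : IsQuasiconvexWith π L H k) {ℓ : B → H}
    (hℓ : ∀ h : H, (h : G) ∈ wordBall π (2 * k + 1) → ∃ b, ℓ b = h) (h : H) :
    ∃ c ∈ subgroupLang π L ℓ k, evalW (FreeMonoid.lift ℓ) c = h := by
  have hπ := hL.surjective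
  obtain ⟨w, hw, hwh⟩ := hL.onto h
  obtain ⟨z, hz₀, hzh, hz⟩ := hk.exists_near_prefixes hw hwh
  have step (i : ℕ) : ∃ b, z (i + 1) = z i * FreeMonoid.lift ℓ (FreeMonoid.of b) := by
    have hd : wdist π (z i : G) (z (i + 1)) ≤ 2 * k + 1 := calc
      _ ≤ wdist π (z i : G) (evalW π (w.take i)) +
          wdist π (evalW π (w.take i)) (z (i + 1)) := wdist_triangle hπ _ _ _
      _ ≤ wdist π (z i : G) (evalW π (w.take i)) +
          (wdist π (evalW π (w.take i)) (evalW π (w.take (i + 1))) +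
            wdist π (evalW π (w.take (i + 1))) (z (i + 1))) := by
        gcongr
        exact wdist_triangle hπ _ _ _
      _ ≤ k + (1 + k) := by
        rw [wdist_comm hπ]
        gcongr
        exacts [hz i, wdist_evalW_take_succ w i, hz (i + 1)]
      _ = 2 * k + 1 := by ring
    obtain ⟨b, hb⟩ := hℓ ((z i)⁻¹ * z (i + 1)) (by simpa using (wdist_le_iff hπ).1 hd)
    exact ⟨b, by simp [hb]⟩
  obtain ⟨c, hc, hcz⟩ := exists_evalW_take_eq z hz₀ step w.length
  have hch : evalW (FreeMonoid.lift ℓ) c = h := by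
    rw [← hzh le_rfl, ← hcz _ le_rfl, ← hc, List.take_length]
  refine ⟨c, mem_subgroupLang.2 ⟨w.zip c, ?_, ⟨fun q hq => ?_, ?_⟩, ?_⟩, ?_⟩
  · rwa [List.map_fst_zip hc.ge]
  · have hi : q.length ≤ w.length := by simpa [hc] using hq.length_le
    rw [List.prefix_iff_eq_take.1 hq, List.map_take, List.map_take, List.map_fst_zip hc.ge,
      List.map_snd_zip hc.le, evalW_comp, hcz _ hi]
    exact (wdist_le_iff hπ).1 (hz _)
  · rw [List.map_fst_zip hc.ge, List.map_snd_zip hc.le, evalW_comp, hch, hwh]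
    rfl
  · exact List.map_snd_zip hc.le
  · exact hch

/-- The shadowed words of `L` have close endpoints since `H ↪ G` is Lipschitz, so they fellow
travel, and properness of `H ↪ G` brings the bound back to `H`. -/
lemma exists_fellowTravel_subgroupLang [Finite A] (hL : IsAutomaticStructure π L) {k : ℕ}
    {ℓ : B → H} (hℓ : ∀ b, (ℓ b : G) ∈ wordBall π (2 * k + 1))
    (hρ : Function.Surjective (FreeMonoid.lift ℓ)) :
    ∃ N : ℕ, ∀ c ∈ subgroupLang π L ℓ k, ∀ c' ∈ subgroupLang π L ℓ k,
      wdist (FreeMonoid.lift ℓ) (evalW (FreeMonoid.lift ℓ) c) (evalW (FreeMonoid.lift ℓ) c') ≤ 1 →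
        FellowTravel (FreeMonoid.lift ℓ) N c c' := by
  have hπ := hL.surjective
  set ρ := H.subtype.comp (FreeMonoid.lift ℓ)
  have hlip (x y : H) : wdist π x y ≤ (2 * k + 1) * wdist (FreeMonoid.lift ℓ) x y := by
    refine wdist_map_le hρ (f := H.subtype) (fun x hx => ?_) x y
    rcases hx with ⟨b, rfl⟩ | ⟨b, rfl⟩
    exacts [by simpa using hℓ b, by simpa using inv_mem_wordBall (hℓ b)]
  have hsync {p : List (A × B)} (hp : p ∈ syncPairs π ρ k) (n : ℕ) :
      wdist π (evalW π ((p.map Prod.fst).take n)) (evalW ρ ((p.map Prod.snd).take n)) ≤ k := by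
    refine wdist_le_of_mem_wordBall ?_
    simpa [List.map_take] using hp.1 _ (List.take_prefix n p)
  obtain ⟨N₁, hN₁⟩ := hL.exists_fellowTravel (2 * k + 1)
  obtain ⟨N, hN⟩ := exists_wdist_le_of_wdist_map_le hπ (ρ := FreeMonoid.lift ℓ)
    H.subtype_injective (k + (N₁ + k))
  refine ⟨N, ?_⟩
  rintro _ hc _ hc' hd
  obtain ⟨p, hp, hps, rfl⟩ := mem_subgroupLang.1 hc
  obtain ⟨p', hp', hps', rfl⟩ := mem_subgroupLang.1 hc'
  have hends : wdist π (evalW π (p.map Prod.fst)) (evalW π (p'.map Prod.fst)) ≤ 2 * k + 1 := by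
    rw [hps.2, hps'.2]
    exact ((hlip _ _).trans (Nat.mul_le_mul_left _ hd)).trans_eq (mul_one _)
  rw [fellowTravel_natCast_iff]
  refine fun n => hN _ _ ?_
  calc _ ≤ wdist π (evalW ρ ((p.map Prod.snd).take n)) (evalW π ((p.map Prod.fst).take n)) +
        (wdist π (evalW π ((p.map Prod.fst).take n)) (evalW π ((p'.map Prod.fst).take n)) +
          wdist π (evalW π ((p'.map Prod.fst).take n)) (evalW ρ ((p'.map Prod.snd).take n))) :=
      (wdist_triangle hπ _ _ _).trans (add_le_add le_rfl (wdist_triangle hπ _ _ _))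
    _ ≤ k + (N₁ + k) := by
      rw [wdist_comm hπ]
      exact add_le_add (hsync hps n) (add_le_add (hN₁ _ hp _ hp' hends n) (hsync hps' n))

theorem IsQuasiconvex.isAutomaticGroup [Finite A] (hL : IsAutomaticStructure π L)
    (hH : IsQuasiconvex π L H) : IsAutomaticGroup H := by
  obtain ⟨k, hk⟩ := hH
  obtain ⟨n, ℓ, -, hℓ⟩ :=
    ((wordBall_finite (π := π) (2 * k + 1)).preimage H.subtype_injective.injOn).fin_param
  have onto := exists_mem_subgroupLang hL hk (ℓ := ℓ) fun h hh => by
    rw [← Set.mem_range, hℓ]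
    exact hh
  have hρ := surjective_of_onto onto
  have hℓS (b : Fin n) : (ℓ b : G) ∈ wordBall π (2 * k + 1) := by
    have hb := Set.mem_range_self (f := ℓ) b
    rwa [hℓ] at hb
  exact ⟨Fin n, inferInstance, FreeMonoid.lift ℓ, subgroupLang π L ℓ k,
    isRegular_subgroupLang hL.regular ℓ k, onto, exists_fellowTravel_subgroupLang hL hℓS hρ⟩

end QuasiconvexSubgroup

end Auto

theorem equalizer_quasiconvex_general {A B G₁ G₂ : Type*} [Fintype B]
    [Group G₁] [Group G₂]
    (π₁ : FreeMonoid A →* G₁)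
    (π₂ : FreeMonoid B →* G₂)
    (L₁ : Language A) (L₂ : Language B)
    (h₁ : IsAutomaticStructure π₁ L₁) (h₂ : IsAutomaticStructure π₂ L₂)
    (φ ψ : G₁ →* G₂)
    (hφ : SyncBRP π₁ π₂ φ L₁ L₂) (hψ : SyncBRP π₁ π₂ ψ L₁ L₂) :
    IsQuasiconvex (convHom π₂ π₂) (convLang L₂ L₂)
        (((MonoidHom.id G₂).prod (MonoidHom.id G₂)).range ⊓ (φ.prod ψ).range) ∧
      IsAutomaticGroup
        ↥(((MonoidHom.id G₂).prod (MonoidHom.id G₂)).range ⊓ (φ.prod ψ).range) := by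
  have hconv := h₂.convolution h₂
  have hqc := h₂.isQuasiconvex_diagonal.inf hconv.surjective
    ((hφ.prod h₂.surjective h₂.surjective hψ).isQuasiconvex_range h₁.onto hconv.surjective)
  exact ⟨hqc, hqc.isAutomaticGroup hconv⟩

/-- If the synchronous BRP holds for `(φ, L₁, L₂)` and `(ψ, L₁, L₂)`, then
the subgroup `{(xφ, xψ) : x ∈ Eq(φ,ψ)}` of `G₂ × G₂`, which equals the intersection of
the diagonal with the image of `x ↦ (xφ, xψ)`, is `(L₂ ⋄ L₂)`-quasiconvex; in particular
it is an automatic group. -/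
theorem equalizer_quasiconvex {A B G₁ G₂ : Type*} [Fintype A] [Fintype B]
    [Group G₁] [Group G₂]
    (π₁ : FreeMonoid A →* G₁) (hπ₁ : Function.Surjective π₁)
    (π₂ : FreeMonoid B →* G₂) (hπ₂ : Function.Surjective π₂)
    (L₁ : Language A) (L₂ : Language B)
    (h₁ : IsAutomaticStructure π₁ L₁) (h₂ : IsAutomaticStructure π₂ L₂)
    (φ ψ : G₁ →* G₂)
    (hφ : SyncBRP π₁ π₂ φ L₁ L₂) (hψ : SyncBRP π₁ π₂ ψ L₁ L₂) :
    IsQuasiconvex (convHom π₂ π₂) (convLang L₂ L₂)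
        (((MonoidHom.id G₂).prod (MonoidHom.id G₂)).range ⊓ (φ.prod ψ).range) ∧
      IsAutomaticGroup
        ↥(((MonoidHom.id G₂).prod (MonoidHom.id G₂)).range ⊓ (φ.prod ψ).range) :=
  equalizer_quasiconvex_general π₁ π₂ L₁ L₂ h₁ h₂ φ ψ hφ hψ
end
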